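/- arXiv:2011.03879 — 2 statements merged into one kernel-verified Lean document; each statement's English description precedes it below -/
import Mathlib

section
/- Let α, k : [x', x''] → ℝ with k integrable and α increasing. If ∫_x^{x''} k(t) dt ≥ 0 for all x ∈ [x', x''], then ∫_{x'}^{x''} α(t)·k(t) dt ≥ α(x') · ∫_{x'}^{x''} k(t) dt. -/
open intervalIntegral MeasureTheory Set Function

/-- Integral inequality (Quah–Strulovici): if all tail integrals of `k` are
nonnegative and `α` is increasing, then `∫ α·k ≥ α(x')·∫ k`. -/
theorem stmt2 (x' x'' : ℝ) (hx : x' ≤ x'') (α k : ℝ → ℝ)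
    (hk : IntervalIntegrable k MeasureTheory.volume x' x'')
    (hα : MonotoneOn α (Set.Icc x' x''))
    (htail : ∀ x ∈ Set.Icc x' x'', 0 ≤ ∫ t in x..x'', k t) :
    α x' * ∫ t in x'..x'', k t ≤ ∫ t in x'..x'', α t * k t := by
  -- Extend `α` to a monotone function `β` on all of `ℝ`.
  set β : ℝ → ℝ := fun t => α (max x' (min t x'')) with hβdef
  have hproj : ∀ t, max x' (min t x'') ∈ Icc x' x'' := fun t =>
    ⟨le_max_left _ _, max_le hx (min_le_right _ _)⟩
  have hβmono : Monotone β := fun a b hab =>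
    hα (hproj a) (hproj b) (max_le_max le_rfl (min_le_min_right _ hab))
  have hβeq : ∀ t ∈ Icc x' x'', β t = α t := by
    intro t ht
    simp only [hβdef]
    rw [min_eq_left ht.2, max_eq_right ht.1]
  -- The right-continuous modification of `β` and its Stieltjes measure.
  set f := hβmono.stieltjesFunction with hfdef
  set ν : Measure ℝ := f.measure.restrict (Ioc x' x'') with hνdef
  set ρ : Measure ℝ := volume.restrict (Ioc x' x'') with hρdef
  have hνfin : IsFiniteMeasure ν := by
    constructor
    rw [hνdef, Measure.restrict_apply_univ, f.measure_Ioc]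
    exact ENNReal.ofReal_lt_top
  have hkρ : Integrable k ρ := hk.1
  -- The kernel for Fubini.
  set g : ℝ → ℝ → ℝ := fun s t => if s ≤ t then k t else 0 with hgdef
  have hS : MeasurableSet {p : ℝ × ℝ | p.1 ≤ p.2} :=
    measurableSet_le measurable_fst measurable_snd
  have h1 : uncurry g = Set.indicator {p : ℝ × ℝ | p.1 ≤ p.2} (fun p => k p.2) := by
    funext p
    by_cases h : p.1 ≤ p.2 <;> simp [hgdef, uncurry, h, Set.indicator_apply]
  have hk2 : Integrable (fun p : ℝ × ℝ => k p.2) (ν.prod ρ) := by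
    have hmeas : AEStronglyMeasurable (fun p : ℝ × ℝ => k p.2) (ν.prod ρ) :=
      hkρ.aestronglyMeasurable.comp_snd
    rw [integrable_prod_iff hmeas]
    refine ⟨Filter.Eventually.of_forall fun s => hkρ, ?_⟩
    simpa using integrable_const (μ := ν) (∫ y, ‖k y‖ ∂ρ)
  have hG : Integrable (uncurry g) (ν.prod ρ) := by
    rw [h1]; exact hk2.indicator hS
  -- Fubini.
  have hswap : ∫ s, ∫ t, g s t ∂ρ ∂ν = ∫ t, ∫ s, g s t ∂ν ∂ρ :=
    integral_integral_swap hG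
  -- The left side is nonnegative thanks to the tail integrals.
  have hL : 0 ≤ ∫ s, ∫ t, g s t ∂ρ ∂ν := by
    apply MeasureTheory.integral_nonneg_of_ae
    filter_upwards [ae_restrict_mem measurableSet_Ioc] with s hs
    have hgs : (fun t => g s t) = (Ici s).indicator k := by
      funext t
      by_cases h : s ≤ t <;> simp [hgdef, Set.indicator_apply, h]
    rw [hgs, hρdef, MeasureTheory.integral_indicator measurableSet_Ici,
      Measure.restrict_restrict measurableSet_Ici]
    have hset : Ici s ∩ Ioc x' x'' = Icc s x'' := by
      ext t
      simp only [mem_inter_iff, mem_Ici, mem_Ioc, mem_Icc]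
      exact ⟨fun h => ⟨h.1, h.2.2⟩, fun h => ⟨h.1, lt_of_lt_of_le hs.1 h.1, h.2⟩⟩
    rw [hset, integral_Icc_eq_integral_Ioc, ← intervalIntegral.integral_of_le hs.2]
    exact htail s ⟨hs.1.le, hs.2⟩
  -- The right side computes to `∫ (f t - f x') * k t`.
  have hR : ∫ t, ∫ s, g s t ∂ν ∂ρ = ∫ t in Ioc x' x'', (f t - f x') * k t := by
    rw [hρdef]
    apply setIntegral_congr_fun measurableSet_Ioc
    intro t ht
    show ∫ s, g s t ∂ν = (f t - f x') * k t
    have hgt : (fun s => g s t) = (Iic t).indicator (fun _ => k t) := by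
      funext s
      by_cases h : s ≤ t <;> simp [hgdef, Set.indicator_apply, h]
    rw [hgt, MeasureTheory.integral_indicator measurableSet_Iic, setIntegral_const, hνdef,
      measureReal_def, Measure.restrict_apply measurableSet_Iic]
    have hset : Iic t ∩ Ioc x' x'' = Ioc x' t := by
      ext u
      simp only [mem_inter_iff, mem_Iic, mem_Ioc]
      exact ⟨fun h => ⟨h.2.1, h.1⟩, fun h => ⟨h.2, h.1, h.2.trans ht.2⟩⟩
    rw [hset, f.measure_Ioc, ENNReal.toReal_ofReal (sub_nonneg.2 (f.mono ht.1.le))]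
    rw [smul_eq_mul, mul_comm]
  have hkey : 0 ≤ ∫ t in Ioc x' x'', (f t - f x') * k t := by
    rw [← hR, ← hswap]; exact hL
  -- Integrability of `f·k` on the interval.
  have hbd : ∀ᵐ t ∂ρ, ‖f t‖ ≤ |f x'| + |f x''| := by
    filter_upwards [ae_restrict_mem measurableSet_Ioc] with t ht
    have h1 : f x' ≤ f t := f.mono ht.1.le
    have h2 : f t ≤ f x'' := f.mono ht.2
    rw [Real.norm_eq_abs, abs_le]
    constructor
    · nlinarith [abs_nonneg (f x''), neg_abs_le (f x'), le_abs_self (f x'')]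
    · nlinarith [abs_nonneg (f x'), le_abs_self (f x''), neg_abs_le (f x')]
  have hfmeas : AEStronglyMeasurable f ρ :=
    (f.mono.measurable).aestronglyMeasurable
  have hfk : Integrable (fun t => f t * k t) ρ := hkρ.bdd_mul hfmeas hbd
  have hsplit : ∫ t in Ioc x' x'', (f t - f x') * k t
      = (∫ t in Ioc x' x'', f t * k t) - f x' * ∫ t in Ioc x' x'', k t := by
    have : (fun t => (f t - f x') * k t) = fun t => f t * k t - f x' * k t := by
      funext t; ring
    rw [this, integral_sub hfk (hkρ.const_mul (f x')), MeasureTheory.integral_const_mul]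
  -- `f = α` a.e. on the interval.
  have hae : ∫ t in Ioc x' x'', f t * k t = ∫ t in Ioc x' x'', α t * k t := by
    apply setIntegral_congr_ae measurableSet_Ioc
    have hnull : volume {t | ¬ContinuousAt β t} = 0 :=
      Set.Countable.measure_zero hβmono.countable_not_continuousAt _
    have hcont : ∀ᵐ t ∂(volume : Measure ℝ), ContinuousAt β t := by
      rw [ae_iff]; exact hnull
    filter_upwards [hcont] with t hct ht
    have hfv : f t = β t := by
      have := (hβmono.continuousWithinAt_Ioi_iff_rightLim_eq).1 hct.continuousWithinAt
      simpa [hfdef, Monotone.stieltjesFunction_eq] using this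
    rw [hfv, hβeq t ⟨ht.1.le, ht.2⟩]
  -- `α x' ≤ f x'` and `0 ≤ ∫ k`.
  have hαf : α x' ≤ f x' := by
    have h1 : β x' ≤ Function.rightLim β x' := hβmono.le_rightLim le_rfl
    have h2 : β x' = α x' := hβeq x' ⟨le_rfl, hx⟩
    rw [h2] at h1
    exact h1
  have hknn : 0 ≤ ∫ t in Ioc x' x'', k t := by
    rw [← intervalIntegral.integral_of_le hx]
    exact htail x' ⟨le_rfl, hx⟩
  -- Put everything together.
  rw [intervalIntegral.integral_of_le hx, intervalIntegral.integral_of_le hx, ← hae]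
  have h2 : f x' * ∫ t in Ioc x' x'', k t ≤ ∫ t in Ioc x' x'', f t * k t := by
    have := hkey
    rw [hsplit] at this
    linarith
  calc α x' * ∫ t in Ioc x' x'', k t
      ≤ f x' * ∫ t in Ioc x' x'', k t := mul_le_mul_of_nonneg_right hαf hknn
    _ ≤ ∫ t in Ioc x' x'', f t * k t := h2
end

section
/- Consider the objective Π(v*) = h(V(v*)) · ∫_{v*}^{v̄} β̃(v) q(v) dv where V(v*) = ∫_{v*}^{v̄} v q(v) dv, β̃(v) = α(v)·β(v), α is positive and increasing, h is decreasing and differentiable, β(v)/v is increasing, q is a positive density, and ∫ β(v) q(v) dv ≥ 0. Then at every threshold v*, the derivative satisfies Π'(v* | β̃) ≥ α(v*) · Π'(v* | β), where Π'(v*|β) = -h'(V(v*)) v* q(v*) ∫_{v*}^{v̄} β(v) q(v) dv - h(V(v*)) β(v*) q(v*). -/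
open MeasureTheory Set Function intervalIntegral

/-- Second mean value inequality: for a bounded monotone `A` and an integrable `f`
whose tail integrals are nonnegative, `A a * ∫ f ≤ ∫ A * f`. -/
lemma second_mvt (a b : ℝ) (hab : a ≤ b) (f A : ℝ → ℝ) (hA : Monotone A)
    (C : ℝ) (hbd : ∀ x, |A x| ≤ C)
    (hf : IntegrableOn f (Set.Ioc a b))
    (hG : ∀ x ∈ Set.Icc a b, 0 ≤ ∫ t in x..b, f t) :
    A a * ∫ t in a..b, f t ≤ ∫ t in a..b, A t * f t := by
  set Ar := hA.stieltjesFunction with hAr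
  have hArx : ∀ x, Ar x = rightLim A x := hA.stieltjesFunction_eq
  set μ := Ar.measure with hμ
  set ρ := volume.restrict (Set.Ioc a b) with hρ
  set ν := μ.restrict (Set.Ioc a b) with hν
  have hνfin : IsFiniteMeasure ν := by
    constructor
    rw [hν, Measure.restrict_apply_univ, Ar.measure_Ioc]
    exact ENNReal.ofReal_ne_top.lt_top
  -- bound on Ar
  have hArbd : ∀ x, |Ar x| ≤ C := by
    intro x
    rw [abs_le]
    constructor
    · exact le_trans (neg_le_of_abs_le (hbd x)) (by rw [hArx]; exact hA.le_rightLim le_rfl)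
    · rw [hArx]
      exact le_trans (hA.rightLim_le (lt_add_one x)) (le_of_abs_le (hbd (x + 1)))
  have hArmeas : Measurable Ar := Ar.mono.measurable
  -- integrability of Ar * f on ρ
  have hArf : Integrable (fun t => Ar t * f t) ρ :=
    hf.bdd_mul hArmeas.aestronglyMeasurable (Filter.Eventually.of_forall fun x => by simpa using hArbd x)
  have hAf : Integrable (fun t => A t * f t) ρ :=
    hf.bdd_mul hA.measurable.aestronglyMeasurable (Filter.Eventually.of_forall fun x => by simpa using hbd x)
  -- A = Ar a.e.
  have hae : (fun t => A t * f t) =ᵐ[volume] fun t => Ar t * f t := by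
    filter_upwards [hA.countable_not_continuousAt.ae_notMem volume] with t ht
    simp only [Set.mem_setOf_eq, not_not] at ht
    rw [hArx, hA.continuousWithinAt_Ioi_iff_rightLim_eq.1 ht.continuousWithinAt]
  have hstep1 : (∫ t in a..b, A t * f t) = ∫ t in a..b, Ar t * f t := by
    apply intervalIntegral.integral_congr_ae
    filter_upwards [hae] with t ht _
    exact ht
  -- the key nonnegativity
  have key : 0 ≤ ∫ t in Set.Ioc a b, (Ar t - Ar a) * f t := by
    have h1 : (∫ t in Set.Ioc a b, (Ar t - Ar a) * f t)
        = ∫ t in Set.Ioc a b, (μ (Set.Ioc a t)).toReal * f t := by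
      apply setIntegral_congr_fun measurableSet_Ioc
      intro t ht
      dsimp only
      rw [hμ, Ar.measure_Ioc, ENNReal.toReal_ofReal (sub_nonneg.2 (Ar.mono ht.1.le))]
    have h2 : ∀ t ∈ Set.Ioc a b,
        (μ (Set.Ioc a t)).toReal * f t
          = ∫ s, Set.indicator (Set.Ioc a t) (fun _ => f t) s ∂ν := by
      intro t ht
      rw [integral_indicator_const _ measurableSet_Ioc, measureReal_def]
      rw [hν, Measure.restrict_apply measurableSet_Ioc,
        Set.inter_eq_self_of_subset_left (Set.Ioc_subset_Ioc le_rfl ht.2)]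
      simp [mul_comm]
    have h3 : (∫ t in Set.Ioc a b, (μ (Set.Ioc a t)).toReal * f t)
        = ∫ t, (∫ s, Set.indicator (Set.Ioc a t) (fun _ => f t) s ∂ν) ∂ρ := by
      rw [hρ]
      exact setIntegral_congr_fun measurableSet_Ioc h2
    -- Fubini
    have hS : MeasurableSet {p : ℝ × ℝ | a < p.2 ∧ p.2 ≤ p.1} :=
      (measurableSet_lt measurable_const measurable_snd).inter
        (measurableSet_le measurable_snd measurable_fst)
    have huncurry : (uncurry fun t s => Set.indicator (Set.Ioc a t) (fun _ => f t) s)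
        = Set.indicator {p : ℝ × ℝ | a < p.2 ∧ p.2 ≤ p.1} (fun p => f p.1) := by
      funext p
      simp only [uncurry, Set.indicator, Set.mem_Ioc, Set.mem_setOf_eq]
    have hint : Integrable
        (uncurry fun t s => Set.indicator (Set.Ioc a t) (fun _ => f t) s) (ρ.prod ν) := by
      rw [huncurry]
      apply Integrable.indicator _ hS
      have : Integrable (fun p : ℝ × ℝ => f p.1 * (fun _ : ℝ => (1:ℝ)) p.2) (ρ.prod ν) :=
        Integrable.mul_prod hf (integrable_const 1)
      simpa using this
    have hswap : (∫ t, (∫ s, Set.indicator (Set.Ioc a t) (fun _ => f t) s ∂ν) ∂ρ)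
        = ∫ s, (∫ t, Set.indicator (Set.Ioc a t) (fun _ => f t) s ∂ρ) ∂ν :=
      integral_integral_swap hint
    rw [h1, h3, hswap]
    -- inner integral nonneg for a.e. s
    apply MeasureTheory.integral_nonneg_of_ae
    have hmem : ∀ᵐ s ∂ν, s ∈ Set.Ioc a b := ae_restrict_mem measurableSet_Ioc
    filter_upwards [hmem] with s hs
    have hinner : (∫ t, Set.indicator (Set.Ioc a t) (fun _ => f t) s ∂ρ)
        = ∫ t in Set.Icc s b, f t := by
      have : (fun t => Set.indicator (Set.Ioc a t) (fun _ => f t) s)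
          = Set.indicator (Set.Ici s) f := by
        funext t
        simp only [Set.indicator, Set.mem_Ioc, Set.mem_Ici]
        by_cases h : s ≤ t
        · simp [h, hs.1]
        · simp [h]
      rw [this, MeasureTheory.integral_indicator measurableSet_Ici, hρ,
        Measure.restrict_restrict measurableSet_Ici]
      have hset : Set.Ici s ∩ Set.Ioc a b = Set.Icc s b := by
        ext u
        simp only [Set.mem_inter_iff, Set.mem_Ici, Set.mem_Ioc, Set.mem_Icc]
        constructor
        · rintro ⟨h1, _, h3⟩; exact ⟨h1, h3⟩
        · rintro ⟨h1, h2⟩; exact ⟨h1, lt_of_lt_of_le hs.1 h1, h2⟩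
      rw [hset]
    rw [hinner, integral_Icc_eq_integral_Ioc, ← intervalIntegral.integral_of_le hs.2]
    exact hG s ⟨hs.1.le, hs.2⟩
  -- put together
  have hTnn : 0 ≤ ∫ t in a..b, f t := hG a ⟨le_rfl, hab⟩
  have hAa : A a ≤ Ar a := by rw [hArx]; exact hA.le_rightLim le_rfl
  have hsplit : (∫ t in Set.Ioc a b, (Ar t - Ar a) * f t)
      = (∫ t in a..b, Ar t * f t) - Ar a * ∫ t in a..b, f t := by
    rw [intervalIntegral.integral_of_le hab, intervalIntegral.integral_of_le hab,
      ← MeasureTheory.integral_const_mul, ← MeasureTheory.integral_sub hArf (hf.const_mul _)]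
    congr 1
    funext t
    ring
  have : Ar a * ∫ t in a..b, f t ≤ ∫ t in a..b, Ar t * f t := by
    rw [hsplit] at key; linarith
  calc A a * ∫ t in a..b, f t ≤ Ar a * ∫ t in a..b, f t := mul_le_mul_of_nonneg_right hAa hTnn
    _ ≤ ∫ t in a..b, Ar t * f t := this
    _ = ∫ t in a..b, A t * f t := hstep1.symm
/-- Derivative comparison for the threshold objective after the payoff change
`β̃ = α·β`: `Π'(v*|β̃) ≥ α(v*)·Π'(v*|β)`. -/
theorem stmt3 (vlo vhi : ℝ) (hlo : 0 < vlo) (hle : vlo ≤ vhi)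
    (q h h' β α : ℝ → ℝ)
    (hq : ∀ v, 0 < q v)
    (hh : ∀ x, HasDerivAt h (h' x) x)
    (hdec : ∀ x y : ℝ, x ≤ y → h y ≤ h x)
    (hpos : ∀ x, 0 ≤ h x)
    (hratio : MonotoneOn (fun v => β v / v) (Set.Icc vlo vhi))
    (htail : ∀ x ∈ Set.Icc vlo vhi, 0 ≤ ∫ v in x..vhi, β v * q v)
    (hα : MonotoneOn α (Set.Icc vlo vhi))
    (hαpos : ∀ v, 0 < α v) :
    ∀ vs ∈ Set.Icc vlo vhi,
      α vs *
        (-(h' (∫ v in vs..vhi, v * q v)) * vs * q vs * (∫ v in vs..vhi, β v * q v)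
          - h (∫ v in vs..vhi, v * q v) * β vs * q vs)
      ≤ -(h' (∫ v in vs..vhi, v * q v)) * vs * q vs *
            (∫ v in vs..vhi, α v * β v * q v)
          - h (∫ v in vs..vhi, v * q v) * (α vs * β vs) * q vs := by
  -- h' is nonpositive everywhere since h is decreasing
  have hder : ∀ x, h' x ≤ 0 := by
    intro x
    have hsub : Set.Ioi x ⊆ {x}ᶜ := fun y hy => ne_of_gt hy
    have ht : Filter.Tendsto (slope h x) (nhdsWithin x (Set.Ioi x)) (nhds (h' x)) :=
      (hasDerivAt_iff_tendsto_slope.mp (hh x)).mono_left (nhdsWithin_mono x hsub)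
    refine le_of_tendsto ht ?_
    filter_upwards [self_mem_nhdsWithin] with y hy
    rw [slope_def_field]
    have h1 : h y - h x ≤ 0 := sub_nonpos.2 (hdec x y (le_of_lt hy))
    have h2 : 0 ≤ y - x := sub_nonneg.2 (le_of_lt hy)
    exact div_nonpos_of_nonpos_of_nonneg h1 h2
  intro vs hvs
  obtain ⟨hvs1, hvs2⟩ := hvs
  set V := ∫ v in vs..vhi, v * q v with hV
  have hc : 0 ≤ -(h' V) * vs * q vs :=
    mul_nonneg (mul_nonneg (neg_nonneg.2 (hder V)) (le_of_lt (lt_of_lt_of_le hlo hvs1)))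
      (le_of_lt (hq vs))
  -- clamped extension of α
  set A : ℝ → ℝ := fun v => α (min (max v vlo) vhi) with hAdef
  have hproj : ∀ v, min (max v vlo) vhi ∈ Set.Icc vlo vhi := fun v =>
    ⟨le_min (le_max_right v vlo) hle, min_le_right _ _⟩
  have hAmono : Monotone A := by
    intro x y hxy
    exact hα (hproj x) (hproj y)
      (min_le_min (max_le_max hxy le_rfl) le_rfl)
  have hAeq : ∀ v ∈ Set.Icc vlo vhi, A v = α v := by
    intro v hv
    simp only [hAdef, max_eq_left hv.1, min_eq_left hv.2]
  have hAlo : ∀ v, α vlo ≤ A v := fun v =>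
    hα (Set.left_mem_Icc.2 hle) (hproj v) (hproj v).1
  have hAhi : ∀ v, A v ≤ α vhi := fun v =>
    hα (hproj v) (Set.right_mem_Icc.2 hle) (hproj v).2
  have hApos : ∀ v, 0 < A v := fun v => hαpos _
  have hbd : ∀ x, |A x| ≤ α vhi := fun x => by
    rw [abs_of_pos (hApos x)]; exact hAhi x
  set f : ℝ → ℝ := fun v => β v * q v with hfdef
  by_cases hfi : IntervalIntegrable f MeasureTheory.volume vs vhi
  · -- integrable case: use the second mean value inequality
    have hfInt : MeasureTheory.IntegrableOn f (Set.Ioc vs vhi) :=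
      (intervalIntegrable_iff_integrableOn_Ioc_of_le hvs2).mp hfi
    have hG : ∀ x ∈ Set.Icc vs vhi, 0 ≤ ∫ t in x..vhi, f t := fun x hx =>
      htail x ⟨le_trans hvs1 hx.1, hx.2⟩
    have hkey := second_mvt vs vhi hvs2 f A hAmono (α vhi) hbd hfInt hG
    have hcongr : (∫ t in vs..vhi, A t * f t) = ∫ v in vs..vhi, α v * β v * q v := by
      apply intervalIntegral.integral_congr
      intro v hv
      rw [Set.uIcc_of_le hvs2] at hv
      have hv' : v ∈ Set.Icc vlo vhi := ⟨le_trans hvs1 hv.1, hv.2⟩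
      simp only [hfdef]
      rw [hAeq v hv']
      ring
    rw [hcongr, hAeq vs ⟨hvs1, hvs2⟩] at hkey
    have hmul := mul_le_mul_of_nonneg_left hkey hc
    nlinarith [hmul]
  · -- non-integrable case: both integrals vanish
    have hti : ¬ IntervalIntegrable (fun v => α v * β v * q v) MeasureTheory.volume vs vhi := by
      intro hti
      apply hfi
      rw [intervalIntegrable_iff_integrableOn_Ioc_of_le hvs2]
      have h1 : MeasureTheory.IntegrableOn
          (fun v => (A v)⁻¹ * (α v * β v * q v)) (Set.Ioc vs vhi) := by
        apply MeasureTheory.Integrable.bdd_mul (c := (α vlo)⁻¹)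
          ((intervalIntegrable_iff_integrableOn_Ioc_of_le hvs2).mp hti)
          (hAmono.measurable.inv).aestronglyMeasurable
        refine Filter.Eventually.of_forall fun x => ?_
        rw [Real.norm_eq_abs, Pi.inv_apply, abs_of_pos (inv_pos.2 (hApos x))]
        exact inv_anti₀ (hαpos vlo) (hAlo x)
      apply h1.congr_fun _ measurableSet_Ioc
      intro v hv
      have hv' : v ∈ Set.Icc vlo vhi := ⟨le_trans hvs1 (le_of_lt hv.1), hv.2⟩
      simp only [hfdef]
      rw [hAeq v hv']
      field_simp [ne_of_gt (hαpos v)]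
    rw [intervalIntegral.integral_undef hti]
    have : (∫ v in vs..vhi, β v * q v) = 0 := intervalIntegral.integral_undef hfi
    rw [this]
    apply le_of_eq
    ring
end
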